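/- Let (X,μ) be a σ-finite measure space and f ∈ L¹(X,μ)⁺ with support of full measure restriction. Then there exists a doubly stochastic operator T from (supp f, μ) to the interval [0, μ(supp f)) with Lebesgue measure such that T(f) = f↓ and T*(f↓) = f, where T* is the dual operator. -/

import Mathlib

/-!
The decreasing rearrangement `φ = f↓` on `[0, μ(supp f))` is equimeasurable with `f` on
`supp f`: on `(0, ∞)` both push-forward measures have tail function `t ↦ μ {f > t}`, which is
finite because `f` is integrable, and both vanish on `(-∞, 0]`.

Given two maps `f`, `φ` with the same image measure `ρ`, let `T h := k ∘ φ`, where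
`μ[h | σ(f)] = k ∘ f` (Doob–Dynkin). Conditional expectation makes `T` positive, unital and
integral preserving, and the pull-out property shows that the same construction with `f` and
`φ` exchanged is its dual. As `f` is `σ(f)`-measurable, `T f = φ`, and symmetrically
`T* φ = f`.
-/

open MeasureTheory Set
open scoped ENNReal

/-- The distribution function `D_f(t) = μ{x : f x > t}`. -/
noncomputable def distFun {X : Type*} [MeasurableSpace X] (μ : Measure X)
    (f : X → ℝ≥0∞) (t : ℝ≥0∞) : ℝ≥0∞ := μ {x | t < f x}

/-- The decreasing rearrangement `f↓(r) = inf {t > 0 : D_f(t) ≤ r}`. -/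
noncomputable def decRearr {X : Type*} [MeasurableSpace X] (μ : Measure X)
    (f : X → ℝ≥0∞) (r : ℝ) : ℝ≥0∞ :=
  sInf {t : ℝ≥0∞ | 0 < t ∧ distFun μ f t ≤ ENNReal.ofReal r}

open Filter

section HalfLine

theorem iUnion_Ioi_inv_succ : ⋃ n : ℕ, Ioi ((n + 1 : ℝ)⁻¹) = Ioi 0 := by
  ext x
  simp only [mem_iUnion, mem_Ioi]
  refine ⟨fun ⟨n, hn⟩ => lt_trans (by positivity) hn, fun hx => ?_⟩
  obtain ⟨n, hn⟩ := exists_nat_one_div_lt hx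
  exact ⟨n, by simpa using hn⟩

variable {ρ ρ' : Measure ℝ}

theorem sigmaFinite_of_Ioi_pos (h₀ : ρ (Iic 0) = 0) (hfin : ∀ t > 0, ρ (Ioi t) ≠ ∞) :
    SigmaFinite ρ := by
  refine Measure.sigmaFinite_of_countable
    (S := insert (Iic 0) (range fun n : ℕ => Ioi ((n + 1 : ℝ)⁻¹))) ((countable_range _).insert _)
    ?_ ?_
  · rintro s (rfl | ⟨n, rfl⟩)
    · simp [h₀]
    · exact (hfin _ (by positivity)).lt_top
  · rw [sUnion_insert, sUnion_range, iUnion_Ioi_inv_succ, Iic_union_Ioi]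

theorem MeasureTheory.Measure.ext_of_Ioi_pos (h₀ : ρ (Iic 0) = 0) (h₀' : ρ' (Iic 0) = 0)
    (hfin : ∀ t > 0, ρ (Ioi t) ≠ ∞) (h : ∀ t > 0, ρ (Ioi t) = ρ' (Ioi t)) : ρ = ρ' := by
  have carrier {m : Measure ℝ} (hm : m (Iic 0) = 0) :
      m = m.restrict (⋃ n : ℕ, Ioi ((n + 1 : ℝ)⁻¹)) := by
    rw [iUnion_Ioi_inv_succ, Measure.restrict_eq_self_of_ae_mem
      (ae_iff.2 (measure_mono_null (fun x (hx : ¬ x ∈ Ioi 0) => not_lt.1 hx) hm))]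
  rw [carrier h₀, carrier h₀', Measure.restrict_iUnion_congr]
  intro n
  have ht : (0 : ℝ) < (n + 1 : ℝ)⁻¹ := by positivity
  have : IsFiniteMeasure (ρ.restrict (Ioi (n + 1 : ℝ)⁻¹)) :=
    ⟨by simpa using (hfin _ ht).lt_top⟩
  refine ext_of_generate_finite _ (borel_eq_generateFrom_Ioi ℝ) isPiSystem_Ioi ?_ ?_
  · rintro _ ⟨a, rfl⟩
    simp only [Measure.restrict_apply measurableSet_Ioi, Ioi_inter_Ioi]
    exact h _ (lt_sup_of_lt_right ht)
  · simp [h _ ht]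

def initialSegment (c : ℝ≥0∞) : Set ℝ := {r | 0 ≤ r ∧ ENNReal.ofReal r < c}

theorem volume_initialSegment (c : ℝ≥0∞) : volume (initialSegment c) = c := by
  rcases eq_or_ne c ∞ with rfl | hc
  · have : initialSegment ∞ = Ici 0 := by ext r; simp [initialSegment]
    rw [this, Real.volume_Ici]
  · have : initialSegment c = Ico 0 c.toReal := by
      ext r
      simp only [initialSegment, mem_ofPred_eq, mem_Ico, and_congr_right_iff]
      exact fun hr => ENNReal.ofReal_lt_iff_lt_toReal hr hc
    rw [this, Real.volume_Ico, sub_zero, ENNReal.ofReal_toReal hc]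

end HalfLine

section Rearrangement

variable {X : Type*} [MeasurableSpace X] {μ : Measure X} {F : X → ℝ≥0∞}

theorem distFun_antitone : Antitone (distFun μ F) :=
  fun _ _ hab => measure_mono fun _ hx => hab.trans_lt hx

theorem distFun_le_lintegral_div (hF : AEMeasurable F μ) {t : ℝ≥0∞} (ht : t ≠ 0) (ht' : t ≠ ∞) :
    distFun μ F t ≤ (∫⁻ x, F x ∂μ) / t :=
  (measure_mono fun _ (hx : t < F _) => hx.le).trans (meas_ge_le_lintegral_div hF ht ht')

theorem exists_lt_distFun_of_lt {s c : ℝ≥0∞} (hs : s ≠ ∞) (hc : c < distFun μ F s) :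
    ∃ u, s < u ∧ c < distFun μ F u := by
  have hunion : {x | s < F x} = ⋃ n : ℕ, {x | s + (n : ℝ≥0∞)⁻¹ < F x} := by
    ext x
    simp only [mem_ofPred_eq, mem_iUnion]
    refine ⟨fun hx => ?_, fun ⟨n, hn⟩ => le_self_add.trans_lt hn⟩
    obtain ⟨r, hr, hsr⟩ := ENNReal.lt_iff_exists_add_pos_lt.1 hx
    obtain ⟨n, hn⟩ := ENNReal.exists_inv_nat_lt (a := r) (by exact_mod_cast hr.ne')
    exact ⟨n, (ENNReal.add_lt_add_left hs hn).trans hsr⟩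
  have hmono : Monotone fun n : ℕ => {x | s + (n : ℝ≥0∞)⁻¹ < F x} :=
    fun a b hab x (hx : s + (a : ℝ≥0∞)⁻¹ < F x) =>
      lt_of_le_of_lt (add_le_add le_rfl (ENNReal.inv_le_inv.2 (Nat.cast_le.2 hab))) hx
  rw [distFun, hunion, hmono.measure_iUnion, lt_iSup_iff] at hc
  obtain ⟨n, hn⟩ := hc
  exact ⟨s + (n : ℝ≥0∞)⁻¹, ENNReal.lt_add_right hs (by simp), hn⟩

theorem decRearr_le {t : ℝ≥0∞} {r : ℝ} (ht : 0 < t) (hD : distFun μ F t ≤ ENNReal.ofReal r) :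
    decRearr μ F r ≤ t :=
  sInf_le ⟨ht, hD⟩

theorem lt_decRearr_iff {s : ℝ≥0∞} (hs : s ≠ ∞) (r : ℝ) :
    s < decRearr μ F r ↔ ENNReal.ofReal r < distFun μ F s := by
  constructor
  · intro h
    by_contra! hc
    obtain ⟨u, hsu, hu⟩ := exists_between h
    exact (decRearr_le (pos_of_gt hsu) ((distFun_antitone hsu.le).trans hc)).not_gt hu
  · intro h
    obtain ⟨u, hsu, hu⟩ := exists_lt_distFun_of_lt hs h
    refine hsu.trans_le (le_sInf fun t ht => ?_)
    by_contra! htu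
    exact ((distFun_antitone htu.le).trans ht.2).not_gt hu

theorem decRearr_antitone : Antitone (decRearr μ F) :=
  fun _ _ hab => sInf_le_sInf fun _ ht => ⟨ht.1, ht.2.trans (ENNReal.ofReal_le_ofReal hab)⟩

theorem decRearr_lt_top (hF : AEMeasurable F μ) (hI : ∫⁻ x, F x ∂μ ≠ ∞) {r : ℝ} (hr : 0 < r) :
    decRearr μ F r < ∞ := by
  have hr₀ : ENNReal.ofReal r ≠ 0 := by simpa using hr
  set u := (∫⁻ x, F x ∂μ) / ENNReal.ofReal r + 1
  have hu₀ : u ≠ 0 := by simp [u]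
  have hu : u ≠ ∞ := by simp [u, ENNReal.div_eq_top, hI, hr₀]
  have hIu : ∫⁻ x, F x ∂μ ≤ ENNReal.ofReal r * u :=
    calc ∫⁻ x, F x ∂μ = ENNReal.ofReal r * ((∫⁻ x, F x ∂μ) / ENNReal.ofReal r) :=
          (ENNReal.mul_div_cancel hr₀ ENNReal.ofReal_ne_top).symm
      _ ≤ ENNReal.ofReal r * u := by gcongr; exact le_self_add
  have hDu : distFun μ F u ≤ ENNReal.ofReal r :=
    (distFun_le_lintegral_div hF hu₀ hu).trans (ENNReal.div_le_of_le_mul hIu)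
  exact (decRearr_le (pos_iff_ne_zero.2 hu₀) hDu).trans_lt hu.lt_top

end Rearrangement

noncomputable def decRearrReal {X : Type*} [MeasurableSpace X] (μ : Measure X) (f : X → ℝ)
    (r : ℝ) : ℝ :=
  (decRearr μ (fun x => ENNReal.ofReal (f x)) r).toReal

section RealRearrangement

variable {X : Type*} [MeasurableSpace X] {μ : Measure X} {f : X → ℝ}

theorem distFun_ofReal_zero (hpos : ∀ x, 0 ≤ f x) :
    distFun μ (fun x => ENNReal.ofReal (f x)) 0 = μ (Function.support f) := by
  rw [distFun]
  congr 1
  ext x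
  simp [ENNReal.ofReal_pos, (hpos x).lt_iff_ne, eq_comm]

theorem map_restrict_support_Ioi (hmeas : Measurable f) {t : ℝ} (ht : 0 ≤ t) :
    (μ.restrict (Function.support f)).map f (Ioi t) =
      distFun μ (fun x => ENNReal.ofReal (f x)) (ENNReal.ofReal t) := by
  rw [Measure.map_apply hmeas measurableSet_Ioi,
    Measure.restrict_apply (hmeas measurableSet_Ioi), distFun]
  congr 1
  ext x
  simp only [mem_inter_iff, mem_preimage, mem_Ioi, Function.mem_support, mem_ofPred_eq,
    ENNReal.ofReal_lt_ofReal_iff_of_nonneg ht]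
  exact ⟨And.left, fun hx => ⟨hx, (ht.trans_lt hx).ne'⟩⟩

theorem map_restrict_support_Iic (hmeas : Measurable f) (hpos : ∀ x, 0 ≤ f x) :
    (μ.restrict (Function.support f)).map f (Iic 0) = 0 := by
  rw [Measure.map_apply hmeas measurableSet_Iic,
    Measure.restrict_apply (hmeas measurableSet_Iic)]
  convert measure_empty (μ := μ)
  ext x
  simp [le_antisymm_iff, hpos x]

theorem map_restrict_support_Ioi_ne_top (hmeas : Measurable f) (hint : Integrable f μ) {t : ℝ}
    (ht : 0 < t) : (μ.restrict (Function.support f)).map f (Ioi t) ≠ ∞ := by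
  rw [map_restrict_support_Ioi hmeas ht.le]
  refine ne_top_of_le_ne_top ?_ (distFun_le_lintegral_div
    (ENNReal.measurable_ofReal.comp hmeas).aemeasurable (by simpa using ht) ENNReal.ofReal_ne_top)
  exact ENNReal.div_ne_top hint.lintegral_lt_top.ne (by simpa using ht)

theorem measurable_decRearrReal : Measurable (decRearrReal μ f) :=
  ENNReal.measurable_toReal.comp decRearr_antitone.measurable

theorem lt_decRearrReal_iff (hmeas : Measurable f) (hint : Integrable f μ) {t r : ℝ}
    (ht : 0 ≤ t) (hr : 0 < r) :
    t < decRearrReal μ f r ↔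
      ENNReal.ofReal r < distFun μ (fun x => ENNReal.ofReal (f x)) (ENNReal.ofReal t) := by
  have hfin := decRearr_lt_top (F := fun x => ENNReal.ofReal (f x))
    (ENNReal.measurable_ofReal.comp hmeas).aemeasurable hint.lintegral_lt_top.ne hr
  rw [decRearrReal, ← ENNReal.ofReal_lt_iff_lt_toReal ht hfin.ne,
    lt_decRearr_iff ENNReal.ofReal_ne_top]

theorem map_decRearrReal_Ioi (hmeas : Measurable f) (hpos : ∀ x, 0 ≤ f x)
    (hint : Integrable f μ) {t : ℝ} (ht : 0 ≤ t) :
    (volume.restrict (initialSegment (μ (Function.support f)))).map (decRearrReal μ f) (Ioi t) =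
      distFun μ (fun x => ENNReal.ofReal (f x)) (ENNReal.ofReal t) := by
  rw [Measure.map_apply measurable_decRearrReal measurableSet_Ioi,
    Measure.restrict_apply (measurable_decRearrReal measurableSet_Ioi), ← volume_initialSegment
    (distFun μ (fun x => ENNReal.ofReal (f x)) (ENNReal.ofReal t))]
  refine measure_congr (eventuallyEq_set.2 ((Measure.ae_ne volume 0).mono fun r hr₀ => ?_))
  simp only [initialSegment, mem_inter_iff, mem_preimage, mem_Ioi, mem_ofPred_eq]
  constructor
  · rintro ⟨hφ, hr, -⟩
    exact ⟨hr, (lt_decRearrReal_iff hmeas hint ht (hr.lt_of_ne' hr₀)).1 hφ⟩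
  · rintro ⟨hr, hrD⟩
    refine ⟨(lt_decRearrReal_iff hmeas hint ht (hr.lt_of_ne' hr₀)).2 hrD, hr, ?_⟩
    rw [← distFun_ofReal_zero hpos]
    exact hrD.trans_le (distFun_antitone zero_le)

theorem map_decRearrReal_Iic (hmeas : Measurable f) (hpos : ∀ x, 0 ≤ f x)
    (hint : Integrable f μ) :
    (volume.restrict (initialSegment (μ (Function.support f)))).map (decRearrReal μ f)
      (Iic 0) = 0 := by
  rw [Measure.map_apply measurable_decRearrReal measurableSet_Iic,
    Measure.restrict_apply (measurable_decRearrReal measurableSet_Iic)]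
  refine measure_mono_null (t := {0}) (fun r ⟨hφ, hr, _⟩ => ?_) Real.volume_singleton
  by_contra hr₀
  have hφpos := (lt_decRearrReal_iff hmeas hint le_rfl (hr.lt_of_ne' hr₀)).2
    (by rwa [ENNReal.ofReal_zero, distFun_ofReal_zero hpos])
  exact (not_lt.2 hφ) hφpos

theorem map_decRearrReal_eq (hmeas : Measurable f) (hpos : ∀ x, 0 ≤ f x)
    (hint : Integrable f μ) :
    (volume.restrict (initialSegment (μ (Function.support f)))).map (decRearrReal μ f) =
      (μ.restrict (Function.support f)).map f :=
  Measure.ext_of_Ioi_pos (map_decRearrReal_Iic hmeas hpos hint)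
    (map_restrict_support_Iic hmeas hpos)
    (fun t ht => by
      rw [map_decRearrReal_Ioi hmeas hpos hint ht.le, ← map_restrict_support_Ioi hmeas ht.le]
      exact map_restrict_support_Ioi_ne_top hmeas hint ht)
    (fun t ht => by
      rw [map_decRearrReal_Ioi hmeas hpos hint ht.le, map_restrict_support_Ioi hmeas ht.le])

theorem sigmaFinite_map_restrict_support (hmeas : Measurable f) (hpos : ∀ x, 0 ≤ f x)
    (hint : Integrable f μ) : SigmaFinite ((μ.restrict (Function.support f)).map f) :=
  sigmaFinite_of_Ioi_pos (map_restrict_support_Iic hmeas hpos)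
    fun _ ht => map_restrict_support_Ioi_ne_top hmeas hint ht

end RealRearrangement

section Transfer

variable {α β γ : Type*} [MeasurableSpace α] [MeasurableSpace β] [mγ : MeasurableSpace γ]
  {μ : Measure α} {ν : Measure β} {f : α → γ} {φ : β → γ}

theorem ae_condExp_mem_Icc {m : MeasurableSpace α} {h : α → ℝ} (hh : ∀ᵐ x ∂μ, h x ∈ Icc 0 1) :
    ∀ᵐ x ∂μ, μ[h | m] x ∈ Icc 0 1 := by
  filter_upwards [condExp_nonneg (m := m) (hh.mono fun _ hx => hx.1),
    condExp_le_nonneg_const (m := m) zero_le_one (hh.mono fun _ hx => hx.2)] with x h₀ h₁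
  exact ⟨h₀, h₁⟩

noncomputable def condExpFactor (μ : Measure α) (f : α → γ) (h : α → ℝ) : γ → ℝ :=
  (stronglyMeasurable_condExp (m := mγ.comap f) (μ := μ) (f := h)).exists_eq_measurable_comp.choose

theorem stronglyMeasurable_condExpFactor (h : α → ℝ) :
    StronglyMeasurable (condExpFactor μ f h) :=
  (stronglyMeasurable_condExp (m := mγ.comap f) (μ := μ) (f := h)).exists_eq_measurable_comp
    |>.choose_spec.1

theorem condExp_comap_eq_condExpFactor_comp (h : α → ℝ) :
    μ[h | mγ.comap f] = condExpFactor μ f h ∘ f :=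
  (stronglyMeasurable_condExp (m := mγ.comap f) (μ := μ) (f := h)).exists_eq_measurable_comp
    |>.choose_spec.2

theorem sigmaFinite_trim_comap (hf : Measurable f) [SigmaFinite (μ.map f)] :
    SigmaFinite (μ.trim hf.comap_le) := by
  have hσ := ‹SigmaFinite (μ.map f)›
  rw [← map_trim_comap hf] at hσ
  exact SigmaFinite.of_map _ (comap_measurable f).aemeasurable hσ

theorem integrable_condExpFactor (hf : Measurable f) (h : α → ℝ) :
    Integrable (condExpFactor μ f h) (μ.map f) := by
  rw [integrable_map_measure (stronglyMeasurable_condExpFactor h).aestronglyMeasurable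
    hf.aemeasurable, ← condExp_comap_eq_condExpFactor_comp]
  exact integrable_condExp

theorem condExpFactor_ae_eq (hf : Measurable f) {h : α → ℝ} {k : γ → ℝ} (hk : Measurable k)
    (hhk : μ[h | mγ.comap f] =ᵐ[μ] k ∘ f) : condExpFactor μ f h =ᵐ[μ.map f] k := by
  refine (ae_map_iff hf.aemeasurable
    (measurableSet_eq_fun (stronglyMeasurable_condExpFactor h).measurable hk)).2 ?_
  rw [condExp_comap_eq_condExpFactor_comp] at hhk
  exact hhk

theorem integral_comp_mul_eq_integral_mul_condExpFactor (hf : Measurable f)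
    [SigmaFinite (μ.map f)] {h : α → ℝ} (hh : Integrable h μ) {k : γ → ℝ}
    (hk : StronglyMeasurable k) (hkh : Integrable (fun x => k (f x) * h x) μ) :
    ∫ x, k (f x) * h x ∂μ = ∫ y, k y * condExpFactor μ f h y ∂(μ.map f) := by
  have := sigmaFinite_trim_comap (μ := μ) hf
  have hkf : StronglyMeasurable[mγ.comap f] (k ∘ f) := hk.comp_measurable (comap_measurable f)
  calc ∫ x, k (f x) * h x ∂μ = ∫ x, μ[(k ∘ f) * h | mγ.comap f] x ∂μ :=
        (integral_condExp hf.comap_le).symm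
    _ = ∫ x, k (f x) * μ[h | mγ.comap f] x ∂μ :=
        integral_congr_ae (condExp_mul_of_stronglyMeasurable_left hkf hkh hh)
    _ = ∫ x, k (f x) * condExpFactor μ f h (f x) ∂μ := by
        rw [condExp_comap_eq_condExpFactor_comp]; rfl
    _ = ∫ y, k y * condExpFactor μ f h y ∂(μ.map f) :=
        (integral_map hf.aemeasurable
          (hk.mul (stronglyMeasurable_condExpFactor h)).aestronglyMeasurable).symm

theorem condExpFactor_congr_ae (hf : Measurable f) {h₁ h₂ : α → ℝ} (hh : h₁ =ᵐ[μ] h₂) :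
    condExpFactor μ f h₁ =ᵐ[μ.map f] condExpFactor μ f h₂ :=
  condExpFactor_ae_eq hf (stronglyMeasurable_condExpFactor h₂).measurable <| by
    rw [← condExp_comap_eq_condExpFactor_comp]; exact condExp_congr_ae hh

theorem condExpFactor_add (hf : Measurable f) {h₁ h₂ : α → ℝ} (hh₁ : Integrable h₁ μ)
    (hh₂ : Integrable h₂ μ) :
    condExpFactor μ f (h₁ + h₂) =ᵐ[μ.map f] condExpFactor μ f h₁ + condExpFactor μ f h₂ :=
  condExpFactor_ae_eq hf ((stronglyMeasurable_condExpFactor h₁).measurable.add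
    (stronglyMeasurable_condExpFactor h₂).measurable) <| by
    have := condExp_add hh₁ hh₂ (mγ.comap f)
    simp only [condExp_comap_eq_condExpFactor_comp] at this ⊢
    exact this

theorem condExpFactor_smul (hf : Measurable f) (c : ℝ) (h : α → ℝ) :
    condExpFactor μ f (c • h) =ᵐ[μ.map f] c • condExpFactor μ f h :=
  condExpFactor_ae_eq hf ((stronglyMeasurable_condExpFactor h).measurable.const_smul c) <| by
    have := condExp_smul (μ := μ) c h (mγ.comap f)
    simp only [condExp_comap_eq_condExpFactor_comp] at this ⊢
    exact this

theorem ae_condExpFactor (hf : Measurable f) {h : α → ℝ} {s : Set ℝ} (hs : MeasurableSet s)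
    (hhs : ∀ᵐ x ∂μ, μ[h | mγ.comap f] x ∈ s) : ∀ᵐ y ∂(μ.map f), condExpFactor μ f h y ∈ s := by
  refine (ae_map_iff hf.aemeasurable ((stronglyMeasurable_condExpFactor h).measurable hs)).2 ?_
  rw [condExp_comap_eq_condExpFactor_comp] at hhs
  exact hhs

theorem integrable_condExpFactor_comp (hf : Measurable f) (hφ : MeasurePreserving φ ν (μ.map f))
    (h : α → ℝ) : Integrable (condExpFactor μ f h ∘ φ) ν :=
  (hφ.integrable_comp (integrable_condExpFactor hf h).aestronglyMeasurable).2
    (integrable_condExpFactor hf h)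

noncomputable def transferL1 (hf : Measurable f) (hφ : MeasurePreserving φ ν (μ.map f)) :
    Lp ℝ 1 μ →ₗ[ℝ] Lp ℝ 1 ν where
  toFun h := (integrable_condExpFactor_comp hf hφ h).toL1 _
  map_add' h₁ h₂ := by
    have hsum := (condExpFactor_congr_ae hf (Lp.coeFn_add h₁ h₂)).trans
      (condExpFactor_add hf (L1.integrable_coeFn h₁) (L1.integrable_coeFn h₂))
    refine Lp.ext <| (((integrable_condExpFactor_comp hf hφ _).coeFn_toL1.trans
      (hφ.quasiMeasurePreserving.ae_eq hsum)).trans ?_).trans (Lp.coeFn_add _ _).symm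
    filter_upwards [(integrable_condExpFactor_comp hf hφ h₁).coeFn_toL1,
      (integrable_condExpFactor_comp hf hφ h₂).coeFn_toL1] with r e₁ e₂
    simp only [Function.comp_apply, Pi.add_apply, e₁, e₂]
  map_smul' c h := by
    have hsmul := (condExpFactor_congr_ae hf (Lp.coeFn_smul c h)).trans
      (condExpFactor_smul hf c h)
    refine Lp.ext <| (((integrable_condExpFactor_comp hf hφ _).coeFn_toL1.trans
      (hφ.quasiMeasurePreserving.ae_eq hsmul)).trans ?_).trans (Lp.coeFn_smul _ _).symm
    filter_upwards [(integrable_condExpFactor_comp hf hφ h).coeFn_toL1] with r e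
    simp only [Function.comp_apply, Pi.smul_apply, e, RingHom.id_apply]

theorem coeFn_transferL1 (hf : Measurable f) (hφ : MeasurePreserving φ ν (μ.map f))
    (h : Lp ℝ 1 μ) : transferL1 hf hφ h =ᵐ[ν] condExpFactor μ f h ∘ φ :=
  (integrable_condExpFactor_comp hf hφ h).coeFn_toL1

theorem ae_transferL1_mem (hf : Measurable f) (hφ : MeasurePreserving φ ν (μ.map f))
    {h : Lp ℝ 1 μ} {s : Set ℝ} (hs : MeasurableSet s)
    (hhs : ∀ᵐ x ∂μ, μ[⇑h | mγ.comap f] x ∈ s) : ∀ᵐ r ∂ν, transferL1 hf hφ h r ∈ s := by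
  filter_upwards [coeFn_transferL1 hf hφ h,
    hφ.quasiMeasurePreserving.ae (ae_condExpFactor hf hs hhs)] with r e hr
  rw [e]
  exact hr

theorem transferL1_nonneg (hf : Measurable f) (hφ : MeasurePreserving φ ν (μ.map f))
    {h : Lp ℝ 1 μ} (hh : 0 ≤ h) : 0 ≤ transferL1 hf hφ h :=
  (Lp.coeFn_nonneg _).1 <| ae_transferL1_mem hf hφ measurableSet_Ici <|
    condExp_nonneg ((Lp.coeFn_nonneg h).2 hh)

theorem ae_transferL1_mem_Icc (hf : Measurable f) (hφ : MeasurePreserving φ ν (μ.map f))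
    {h : Lp ℝ 1 μ} (hh : ∀ᵐ x ∂μ, h x ∈ Icc 0 1) :
    ∀ᵐ r ∂ν, transferL1 hf hφ h r ∈ Icc 0 1 :=
  ae_transferL1_mem hf hφ measurableSet_Icc (ae_condExp_mem_Icc hh)

theorem integral_transferL1 (hf : Measurable f) [SigmaFinite (μ.map f)]
    (hφ : MeasurePreserving φ ν (μ.map f)) (h : Lp ℝ 1 μ) :
    ∫ r, transferL1 hf hφ h r ∂ν = ∫ x, h x ∂μ := by
  have := sigmaFinite_trim_comap (μ := μ) hf
  calc ∫ r, transferL1 hf hφ h r ∂ν = ∫ r, condExpFactor μ f h (φ r) ∂ν :=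
        integral_congr_ae (coeFn_transferL1 hf hφ h)
    _ = ∫ y, condExpFactor μ f h y ∂(μ.map f) := by
        rw [← hφ.map_eq, integral_map hφ.measurable.aemeasurable
          (stronglyMeasurable_condExpFactor _).aestronglyMeasurable]
    _ = ∫ x, μ[⇑h | mγ.comap f] x ∂μ := by
        rw [integral_map hf.aemeasurable (stronglyMeasurable_condExpFactor _).aestronglyMeasurable,
          condExp_comap_eq_condExpFactor_comp]
        rfl
    _ = ∫ x, h x ∂μ := integral_condExp hf.comap_le

theorem transferL1_toL1_comp (hf : Measurable f) [SigmaFinite (μ.map f)]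
    (hφ : MeasurePreserving φ ν (μ.map f)) {k : γ → ℝ} (hk : StronglyMeasurable k)
    (hkf : Integrable (k ∘ f) μ) :
    transferL1 hf hφ (hkf.toL1 _) =
      ((hφ.integrable_comp hk.aestronglyMeasurable).2
        ((integrable_map_measure hk.aestronglyMeasurable hf.aemeasurable).2 hkf)).toL1 _ := by
  have := sigmaFinite_trim_comap (μ := μ) hf
  have hfac : condExpFactor μ f (hkf.toL1 _) =ᵐ[μ.map f] k :=
    condExpFactor_ae_eq hf hk.measurable <| (condExp_congr_ae hkf.coeFn_toL1).trans <|
      (condExp_of_stronglyMeasurable hf.comap_le (hk.comp_measurable (comap_measurable f))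
        hkf).eventuallyEq
  exact Lp.ext <| ((coeFn_transferL1 hf hφ _).trans
    (hφ.quasiMeasurePreserving.ae_eq hfac)).trans (Integrable.coeFn_toL1 _).symm

theorem integral_transferL1_mul [SigmaFinite (μ.map f)] (hφ : MeasurePreserving φ ν (μ.map f))
    (hf : MeasurePreserving f μ (ν.map φ)) (h : Lp ℝ 1 μ) {g : Lp ℝ 1 ν}
    (hg : ∀ᵐ r ∂ν, g r ∈ Icc 0 1) :
    ∫ r, transferL1 hf.measurable hφ h r * g r ∂ν =
      ∫ x, h x * transferL1 hφ.measurable hf g x ∂μ := by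
  have : SigmaFinite (ν.map φ) := hφ.map_eq ▸ ‹_›
  have hgφ : ∀ᵐ y ∂(ν.map φ), condExpFactor ν φ g y ∈ Icc 0 1 :=
    ae_condExpFactor hφ.measurable measurableSet_Icc (ae_condExp_mem_Icc hg)
  have bound (t : ℝ) (ht : t ∈ Icc 0 1) : ‖t‖ ≤ 1 := by
    rw [Real.norm_of_nonneg ht.1]; exact ht.2
  calc ∫ r, transferL1 hf.measurable hφ h r * g r ∂ν
      = ∫ r, condExpFactor μ f h (φ r) * g r ∂ν := by
        refine integral_congr_ae ?_
        filter_upwards [coeFn_transferL1 hf.measurable hφ h] with r e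
        rw [e]; rfl
    _ = ∫ y, condExpFactor μ f h y * condExpFactor ν φ g y ∂(ν.map φ) :=
        integral_comp_mul_eq_integral_mul_condExpFactor hφ.measurable (L1.integrable_coeFn g)
          (stronglyMeasurable_condExpFactor h)
          ((integrable_condExpFactor_comp hf.measurable hφ h).mul_bdd
            (Lp.aestronglyMeasurable g) (hg.mono fun _ => bound _))
    _ = ∫ y, condExpFactor ν φ g y * condExpFactor μ f h y ∂(μ.map f) := by
        rw [hφ.map_eq]; simp_rw [mul_comm]
    _ = ∫ x, condExpFactor ν φ g (f x) * h x ∂μ :=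
        (integral_comp_mul_eq_integral_mul_condExpFactor hf.measurable (L1.integrable_coeFn h)
          (stronglyMeasurable_condExpFactor g)
          ((L1.integrable_coeFn h).bdd_mul
            ((stronglyMeasurable_condExpFactor g).comp_measurable
              hf.measurable).aestronglyMeasurable
            ((hf.quasiMeasurePreserving.ae hgφ).mono fun _ => bound _))).symm
    _ = ∫ x, h x * transferL1 hφ.measurable hf g x ∂μ := by
        refine integral_congr_ae ?_
        filter_upwards [coeFn_transferL1 hφ.measurable hf g] with x e
        rw [e, mul_comm]; rfl

end Transfer

theorem stmt5_general {X : Type*} [MeasurableSpace X] (μ : Measure X)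
    (f : X → ℝ) (hmeas : Measurable f) (hpos : ∀ x, 0 ≤ f x)
    (hint : Integrable f μ)
    (S : Set X) (hS : S = Function.support f)
    (J : Set ℝ) (hJ : J = {r : ℝ | 0 ≤ r ∧ ENNReal.ofReal r < μ S}) :
    ∃ (T : Lp ℝ 1 (μ.restrict S) →ₗ[ℝ] Lp ℝ 1 (volume.restrict J))
      (T' : Lp ℝ 1 (volume.restrict J) →ₗ[ℝ] Lp ℝ 1 (μ.restrict S))
      (F : Lp ℝ 1 (μ.restrict S)) (G : Lp ℝ 1 (volume.restrict J)),
      -- F represents f and G represents the decreasing rearrangement f↓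
      (⇑F =ᵐ[μ.restrict S] f) ∧
      (⇑G =ᵐ[volume.restrict J]
        fun r => (decRearr μ (fun x => ENNReal.ofReal (f x)) r).toReal) ∧
      -- positivity
      (∀ h, 0 ≤ h → 0 ≤ T h) ∧ (∀ g, 0 ≤ g → 0 ≤ T' g) ∧
      -- unitality (as maps of L∞ unit balls)
      (∀ h : Lp ℝ 1 (μ.restrict S), (∀ᵐ x ∂(μ.restrict S), 0 ≤ h x ∧ h x ≤ 1) →
        ∀ᵐ r ∂(volume.restrict J), (T h) r ≤ 1) ∧
      (∀ g : Lp ℝ 1 (volume.restrict J), (∀ᵐ r ∂(volume.restrict J), 0 ≤ g r ∧ g r ≤ 1) →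
        ∀ᵐ x ∂(μ.restrict S), (T' g) x ≤ 1) ∧
      -- integral preservation
      (∀ h : Lp ℝ 1 (μ.restrict S), 0 ≤ h →
        ∫ r, (T h) r ∂(volume.restrict J) = ∫ x, h x ∂(μ.restrict S)) ∧
      (∀ g : Lp ℝ 1 (volume.restrict J), 0 ≤ g →
        ∫ x, (T' g) x ∂(μ.restrict S) = ∫ r, g r ∂(volume.restrict J)) ∧
      -- duality: ∫ (T h)·g dν = ∫ h·(T' g) dμ for bounded nonnegative g
      (∀ (h : Lp ℝ 1 (μ.restrict S)) (g : Lp ℝ 1 (volume.restrict J)),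
        0 ≤ h → 0 ≤ g → (∀ᵐ r ∂(volume.restrict J), g r ≤ 1) →
        ∫ r, (T h) r * g r ∂(volume.restrict J)
          = ∫ x, h x * (T' g) x ∂(μ.restrict S)) ∧
      T F = G ∧ T' G = F := by
  subst hS hJ
  have hmap := map_decRearrReal_eq hmeas hpos hint
  have := sigmaFinite_map_restrict_support hmeas hpos hint
  have : SigmaFinite ((volume.restrict (initialSegment (μ (Function.support f)))).map
    (decRearrReal μ f)) := hmap ▸ this
  have hφ := MeasurePreserving.mk measurable_decRearrReal hmap
  have hf := MeasurePreserving.mk hmeas hmap.symm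
  have hfS : Integrable (id ∘ f) (μ.restrict (Function.support f)) := hint.restrict
  have hφJ : Integrable (id ∘ decRearrReal μ f) _ :=
    (integrable_map_measure aestronglyMeasurable_id measurable_decRearrReal.aemeasurable).1
      ((hf.integrable_comp aestronglyMeasurable_id).1 hfS)
  refine ⟨transferL1 hmeas hφ, transferL1 measurable_decRearrReal hf, hfS.toL1 _, hφJ.toL1 _,
    hfS.coeFn_toL1, hφJ.coeFn_toL1, fun _ => transferL1_nonneg hmeas hφ,
    fun _ => transferL1_nonneg measurable_decRearrReal hf,
    fun _ hh => (ae_transferL1_mem_Icc hmeas hφ hh).mono fun _ hr => hr.2,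
    fun _ hg => (ae_transferL1_mem_Icc measurable_decRearrReal hf hg).mono fun _ hr => hr.2,
    fun h _ => integral_transferL1 hmeas hφ h,
    fun g _ => integral_transferL1 measurable_decRearrReal hf g,
    fun h g _ hg₀ hg₁ => integral_transferL1_mul hφ hf h ?_,
    transferL1_toL1_comp hmeas hφ stronglyMeasurable_id hfS,
    transferL1_toL1_comp measurable_decRearrReal hf stronglyMeasurable_id hφJ⟩
  filter_upwards [(Lp.coeFn_nonneg g).2 hg₀, hg₁] with r h₀ h₁
  exact ⟨h₀, h₁⟩

/-- There is a doubly stochastic operator `T` from `(supp f, μ)` to the interval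
`[0, μ(supp f))` with Lebesgue measure, with dual `T'`, such that `T f = f↓` and
`T'(f↓) = f`.  Both `T` and `T'` are positive, map functions bounded by `1` to
functions bounded by `1` (unitality on the `L∞` level), preserve integrals of
nonnegative functions, and are dual to each other via the pairing with bounded
nonnegative functions. -/
theorem stmt5 {X : Type*} [MeasurableSpace X] (μ : Measure X) [SigmaFinite μ]
    (f : X → ℝ) (hmeas : Measurable f) (hpos : ∀ x, 0 ≤ f x)
    (hint : Integrable f μ)
    (S : Set X) (hS : S = Function.support f)
    (J : Set ℝ) (hJ : J = {r : ℝ | 0 ≤ r ∧ ENNReal.ofReal r < μ S}) :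
    ∃ (T : Lp ℝ 1 (μ.restrict S) →ₗ[ℝ] Lp ℝ 1 (volume.restrict J))
      (T' : Lp ℝ 1 (volume.restrict J) →ₗ[ℝ] Lp ℝ 1 (μ.restrict S))
      (F : Lp ℝ 1 (μ.restrict S)) (G : Lp ℝ 1 (volume.restrict J)),
      -- F represents f and G represents the decreasing rearrangement f↓
      (⇑F =ᵐ[μ.restrict S] f) ∧
      (⇑G =ᵐ[volume.restrict J]
        fun r => (decRearr μ (fun x => ENNReal.ofReal (f x)) r).toReal) ∧
      -- positivity
      (∀ h, 0 ≤ h → 0 ≤ T h) ∧ (∀ g, 0 ≤ g → 0 ≤ T' g) ∧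
      -- unitality (as maps of L∞ unit balls)
      (∀ h : Lp ℝ 1 (μ.restrict S), (∀ᵐ x ∂(μ.restrict S), 0 ≤ h x ∧ h x ≤ 1) →
        ∀ᵐ r ∂(volume.restrict J), (T h) r ≤ 1) ∧
      (∀ g : Lp ℝ 1 (volume.restrict J), (∀ᵐ r ∂(volume.restrict J), 0 ≤ g r ∧ g r ≤ 1) →
        ∀ᵐ x ∂(μ.restrict S), (T' g) x ≤ 1) ∧
      -- integral preservation
      (∀ h : Lp ℝ 1 (μ.restrict S), 0 ≤ h →
        ∫ r, (T h) r ∂(volume.restrict J) = ∫ x, h x ∂(μ.restrict S)) ∧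
      (∀ g : Lp ℝ 1 (volume.restrict J), 0 ≤ g →
        ∫ x, (T' g) x ∂(μ.restrict S) = ∫ r, g r ∂(volume.restrict J)) ∧
      -- duality: ∫ (T h)·g dν = ∫ h·(T' g) dμ for bounded nonnegative g
      (∀ (h : Lp ℝ 1 (μ.restrict S)) (g : Lp ℝ 1 (volume.restrict J)),
        0 ≤ h → 0 ≤ g → (∀ᵐ r ∂(volume.restrict J), g r ≤ 1) →
        ∫ r, (T h) r * g r ∂(volume.restrict J)
          = ∫ x, h x * (T' g) x ∂(μ.restrict S)) ∧
      T F = G ∧ T' G = F :=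
  stmt5_general μ f hmeas hpos hint S hS J hJ
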